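/- arXiv:2311.12911 — 5 statements merged into one kernel-verified Lean document; each statement's English description precedes it below -/
import Mathlib

section
/- Let K be a totally real number field of degree d with discriminant Δ_K, and let I be a nonzero integral ideal of O_K. For every totally positive element α ∈ I with N(α) > Δ_K · N(I)², there exists a nonzero β ∈ I such that α − β² is totally positive. -/
/-!
Apply Minkowski's convex body theorem to the lattice `I ⊂ ℝ^d` and the box `|σ(β)| < √σ(α)`.
For a totally real field the covolume of `I` is `N(I) √Δ_K` and the box has volume
`2^d ∏ √σ(α) = 2^d √N(α)`, so `N(α) > Δ_K N(I)²` is exactly Minkowski's volume condition.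
-/

open NumberField

/-- `x ∈ K` is totally positive: every real embedding of `x` is positive. -/
def TotPos (K : Type*) [Field K] (x : K) : Prop := ∀ φ : K →+* ℝ, 0 < φ x

open scoped NNReal nonZeroDivisors
open NumberField.InfinitePlace NumberField.mixedEmbedding MeasureTheory Module

namespace NumberField.InfinitePlace

variable {K : Type*} [Field K]

theorem mk_ofRealHom_comp_apply (φ : K →+* ℝ) (x : K) :
    mk (Complex.ofRealHom.comp φ) x = |φ x| := by
  simp [apply]

variable [NumberField K] [IsTotallyReal K]

theorem prod_sqrt_eq_sqrt_abs_norm_of_isTotallyReal (x : K) :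
    ∏ w : InfinitePlace K, √(w x) = √|(Algebra.norm ℚ x : ℝ)| := by
  rw [← Real.sqrt_prod _ fun w _ ↦ w.1.nonneg x, ← Rat.cast_abs, ← prod_eq_abs_norm]
  simp_rw [IsTotallyReal.mult_eq, pow_one]

end NumberField.InfinitePlace

namespace NumberField.mixedEmbedding

variable {K : Type*} [Field K] [NumberField K] [IsTotallyReal K]

variable (K) in
theorem minkowskiBound_eq_of_isTotallyReal (I : (FractionalIdeal (𝓞 K)⁰ K)ˣ) :
    minkowskiBound K I =
      .ofReal (FractionalIdeal.absNorm I.1 * √|(discr K : ℝ)| * 2 ^ finrank ℚ K) := by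
  classical
  have hN := FractionalIdeal.absNorm_nonneg I.1
  rw [minkowskiBound, volume_fundamentalDomain_fractionalIdealLatticeBasis,
    volume_fundamentalDomain_latticeBasis, mixedEmbedding.finrank,
    IsTotallyReal.nrComplexPlaces_eq_zero, pow_zero, one_mul, ENNReal.ofReal_mul (by positivity),
    ENNReal.ofReal_mul (by positivity), ENNReal.ofReal_pow zero_le_two, ENNReal.ofReal_ofNat,
    ← Int.norm_eq_abs, ← coe_nnnorm, ← Real.coe_sqrt, ENNReal.ofReal_coe_nnreal]

open scoped Classical in
theorem volume_convexBodyLT_of_isTotallyReal (f : InfinitePlace K → ℝ≥0) :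
    volume (convexBodyLT K f) = .ofReal (2 ^ finrank ℚ K * ∏ w, (f w : ℝ)) := by
  simp_rw [convexBodyLT_volume, convexBodyLTFactor, IsTotallyReal.nrComplexPlaces_eq_zero,
    ← IsTotallyReal.finrank, IsTotallyReal.mult_eq, pow_one, pow_zero, mul_one]
  rw [ENNReal.ofReal_mul (by positivity), ENNReal.ofReal_pow zero_le_two, ENNReal.ofReal_ofNat,
    ENNReal.ofReal_prod_of_nonneg fun _ _ ↦ NNReal.coe_nonneg _]
  simp

theorem exists_ne_zero_mem_ideal_lt_of_isTotallyReal (I : (FractionalIdeal (𝓞 K)⁰ K)ˣ)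
    {f : InfinitePlace K → ℝ≥0}
    (h : FractionalIdeal.absNorm I.1 * √|(discr K : ℝ)| < ∏ w, (f w : ℝ)) :
    ∃ a ∈ (I : FractionalIdeal (𝓞 K)⁰ K), a ≠ 0 ∧ ∀ w : InfinitePlace K, w a < f w := by
  classical
  have hN : 0 ≤ (FractionalIdeal.absNorm I.1 : ℝ) :=
    Rat.cast_nonneg.mpr (FractionalIdeal.absNorm_nonneg _)
  refine exists_ne_zero_mem_ideal_lt K I ?_
  rw [minkowskiBound_eq_of_isTotallyReal, volume_convexBodyLT_of_isTotallyReal,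
    ENNReal.ofReal_lt_ofReal_iff_of_nonneg (by positivity), mul_comm]
  gcongr

theorem exists_ne_zero_mem_integralIdeal_lt_of_isTotallyReal {I : Ideal (𝓞 K)} (hI : I ≠ ⊥)
    {f : InfinitePlace K → ℝ≥0} (h : Ideal.absNorm I * √|(discr K : ℝ)| < ∏ w, (f w : ℝ)) :
    ∃ b ∈ I, b ≠ 0 ∧ ∀ w : InfinitePlace K, w (algebraMap (𝓞 K) K b) < f w := by
  have hI' : (I : FractionalIdeal (𝓞 K)⁰ K) ≠ 0 := by simpa using hI
  obtain ⟨a, ha, ha0, hlt⟩ := exists_ne_zero_mem_ideal_lt_of_isTotallyReal (Units.mk0 _ hI')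
    (by simpa [FractionalIdeal.coeIdeal_absNorm] using h)
  obtain ⟨b, hb, rfl⟩ := (FractionalIdeal.mem_coeIdeal _).mp ha
  exact ⟨b, hb, by rintro rfl; simp at ha0, hlt⟩

end NumberField.mixedEmbedding

theorem exists_sq_lt_of_norm_large_general
    (K : Type*) [Field K] [NumberField K]
    (hreal : ∀ v : InfinitePlace K, v.IsReal)
    (I : Ideal (𝓞 K)) (hI : I ≠ ⊥)
    (α : 𝓞 K) (hα : TotPos K (algebraMap (𝓞 K) K α))
    (hnorm : |(NumberField.discr K : ℚ)| * (Ideal.absNorm I : ℚ) ^ 2 <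
      Algebra.norm ℚ (algebraMap (𝓞 K) K α)) :
    ∃ β ∈ I, β ≠ 0 ∧
      ∀ φ : K →+* ℝ, φ (algebraMap (𝓞 K) K β) ^ 2 < φ (algebraMap (𝓞 K) K α) := by
  have : IsTotallyReal K := ⟨hreal⟩
  set a := algebraMap (𝓞 K) K α
  have hbox : Ideal.absNorm I * √|(discr K : ℝ)| < ∏ w : InfinitePlace K, √(w a) := by
    rw [prod_sqrt_eq_sqrt_abs_norm_of_isTotallyReal, mul_comm,
      ← Real.sqrt_sq (Nat.cast_nonneg (Ideal.absNorm I)), ← Real.sqrt_mul (abs_nonneg _)]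
    refine Real.sqrt_lt_sqrt (by positivity) ?_
    exact_mod_cast hnorm.trans_le (le_abs_self _)
  obtain ⟨β, hβI, hβ0, hβ⟩ :=
    exists_ne_zero_mem_integralIdeal_lt_of_isTotallyReal hI (f := fun w ↦ ⟨√(w a), by positivity⟩)
      hbox
  refine ⟨β, hβI, hβ0, fun φ ↦ ?_⟩
  have hφ := hβ (mk (Complex.ofRealHom.comp φ))
  rw [mk_ofRealHom_comp_apply, mk_ofRealHom_comp_apply, abs_of_pos (hα φ)] at hφ
  simpa only [sq_abs] using (Real.lt_sqrt (abs_nonneg _)).mp hφ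

/-- If `α ∈ I` is totally positive with `N(α) > Δ_K · N(I)²`, then there is a nonzero
`β ∈ I` with `α ≻ β²`. -/
theorem exists_sq_lt_of_norm_large
    (K : Type*) [Field K] [NumberField K]
    (hreal : ∀ v : InfinitePlace K, v.IsReal)
    (I : Ideal (𝓞 K)) (hI : I ≠ ⊥)
    (α : 𝓞 K) (hαI : α ∈ I) (hα : TotPos K (algebraMap (𝓞 K) K α))
    (hnorm : |(NumberField.discr K : ℚ)| * (Ideal.absNorm I : ℚ) ^ 2 <
      Algebra.norm ℚ (algebraMap (𝓞 K) K α)) :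
    ∃ β ∈ I, β ≠ 0 ∧
      ∀ φ : K →+* ℝ, φ (algebraMap (𝓞 K) K β) ^ 2 < φ (algebraMap (𝓞 K) K α) :=
  exists_sq_lt_of_norm_large_general K hreal I hI α hα hnorm
end

section
/- Let K be a totally real number field with discriminant Δ_K and I a nonzero integral ideal. If α ∈ I is totally positive and I-indecomposable (α cannot be written as β + γ with β, γ ∈ I both totally positive), then N(α) ≤ Δ_K · N(I)². -/
/-!
If `N(α) > Δ_K N(I)²`, the box `{x : |σ(x)| < √σ(α) for every real embedding σ}` has volume
`2ⁿ √N(α)`, which exceeds `2ⁿ` times the covolume `N(I) √Δ_K` of `I`. Minkowski's theorem then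
gives a nonzero `β ∈ I` with `σ(β)² < σ(α)` for all `σ`, and `α = β² + (α - β²)` is a
decomposition into totally positive elements of `I`.
-/

open NumberField

open scoped NNReal nonZeroDivisors
open MeasureTheory Module

namespace NumberField

variable {K : Type*} [Field K]

theorem InfinitePlace.mk_ofRealHom_comp_apply_s5 (φ : K →+* ℝ) (x : K) :
    mk (Complex.ofRealHom.comp φ) x = |φ x| := by
  rw [apply, RingHom.comp_apply, Complex.ofRealHom_eq_coe, Complex.norm_real, Real.norm_eq_abs]

variable [NumberField K] [IsTotallyReal K]

theorem InfinitePlace.prod_eq_abs_norm_of_isTotallyReal (x : K) :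
    ∏ w : InfinitePlace K, w x = |Algebra.norm ℚ x| := by
  rw [← prod_eq_abs_norm]
  exact Finset.prod_congr rfl fun w _ => by rw [(IsTotallyReal.isReal w).mult_eq_one, pow_one]

namespace mixedEmbedding

theorem minkowskiBound_toReal_of_isTotallyReal (J : (FractionalIdeal (𝓞 K)⁰ K)ˣ) :
    (minkowskiBound K J).toReal =
      FractionalIdeal.absNorm J.1 * √|(discr K : ℝ)| * 2 ^ finrank ℚ K := by
  simp only [minkowskiBound, volume_fundamentalDomain_fractionalIdealLatticeBasis,
    volume_fundamentalDomain_latticeBasis, ENNReal.toReal_mul, ENNReal.toReal_pow,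
    ENNReal.toReal_ofReal (Rat.cast_nonneg.mpr (FractionalIdeal.absNorm_nonneg J.1)),
    IsTotallyReal.nrComplexPlaces_eq_zero, pow_zero, one_mul, mixedEmbedding.finrank,
    ENNReal.coe_toReal, Real.coe_sqrt, coe_nnnorm, Int.norm_eq_abs, ENNReal.toReal_ofNat]

open scoped Classical in
theorem convexBodyLT_volume_of_isTotallyReal (f : InfinitePlace K → ℝ≥0) :
    volume (convexBodyLT K f) = (2 ^ finrank ℚ K * ∏ w, f w : ℝ≥0) := by
  rw [convexBodyLT_volume, convexBodyLTFactor, IsTotallyReal.nrComplexPlaces_eq_zero,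
    ← IsTotallyReal.finrank, pow_zero, mul_one]
  push_cast
  congr 1
  exact Finset.prod_congr rfl fun w _ => by rw [(IsTotallyReal.isReal w).mult_eq_one, pow_one]

end mixedEmbedding

open scoped Classical in
open mixedEmbedding in
theorem exists_ne_zero_mem_ideal_lt_of_absNorm_mul_sqrt_discr_lt {I : Ideal (𝓞 K)} (hI : I ≠ ⊥)
    {f : InfinitePlace K → ℝ≥0} (h : Ideal.absNorm I * √|(discr K : ℝ)| < ∏ w, (f w : ℝ)) :
    ∃ β ∈ I, β ≠ 0 ∧ ∀ w : InfinitePlace K, w (β : K) < f w := by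
  set J := Units.mk0 (I : FractionalIdeal (𝓞 K)⁰ K) (FractionalIdeal.coeIdeal_ne_zero.mpr hI)
  have hvol : volume (convexBodyLT K f) ≠ ⊤ := by
    rw [convexBodyLT_volume_of_isTotallyReal]; exact ENNReal.coe_ne_top
  have hbound : minkowskiBound K J < volume (convexBodyLT K f) := by
    rw [← ENNReal.toReal_lt_toReal (minkowskiBound_lt_top K J).ne hvol,
      minkowskiBound_toReal_of_isTotallyReal, convexBodyLT_volume_of_isTotallyReal,
      Units.val_mk0, FractionalIdeal.coeIdeal_absNorm, ENNReal.coe_toReal, mul_comm (2 ^ _ : ℝ≥0)]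
    push_cast
    gcongr
  obtain ⟨a, haI, ha0, hlt⟩ := exists_ne_zero_mem_ideal_lt K J hbound
  obtain ⟨β, hβI, rfl⟩ := (FractionalIdeal.mem_coeIdeal _).mp haI
  exact ⟨β, hβI, by rintro rfl; simp at ha0, hlt⟩

theorem exists_ne_zero_mem_ideal_forall_sq_lt {I : Ideal (𝓞 K)} (hI : I ≠ ⊥) {α : K}
    (h : |(discr K : ℚ)| * (Ideal.absNorm I : ℚ) ^ 2 < |Algebra.norm ℚ α|) :
    ∃ β ∈ I, β ≠ 0 ∧ ∀ w : InfinitePlace K, w (β : K) ^ 2 < w α := by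
  have hprod : Ideal.absNorm I * √|(discr K : ℝ)| < ∏ w : InfinitePlace K, √(w α) := by
    rw [← Real.sqrt_prod _ fun w _ => apply_nonneg w α,
      InfinitePlace.prod_eq_abs_norm_of_isTotallyReal,
      ← Real.sqrt_sq (Nat.cast_nonneg (Ideal.absNorm I)), ← Real.sqrt_mul (by positivity)]
    exact Real.sqrt_lt_sqrt (by positivity) (by exact_mod_cast (mul_comm _ _).trans_lt h)
  obtain ⟨β, hβI, hβ0, hlt⟩ := exists_ne_zero_mem_ideal_lt_of_absNorm_mul_sqrt_discr_lt hI
    (f := fun w => ⟨√(w α), Real.sqrt_nonneg _⟩) hprod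
  refine ⟨β, hβI, hβ0, fun w => ?_⟩
  calc w (β : K) ^ 2 < √(w α) ^ 2 := by gcongr; exact hlt w
    _ = w α := Real.sq_sqrt (apply_nonneg w α)

end NumberField

/-- An `I`-indecomposable totally positive element has norm at most `Δ_K · N(I)²`. -/
theorem norm_le_of_indecomposable
    (K : Type*) [Field K] [NumberField K]
    (hreal : ∀ v : InfinitePlace K, v.IsReal)
    (I : Ideal (𝓞 K)) (hI : I ≠ ⊥)
    (α : 𝓞 K) (hαI : α ∈ I) (hα : TotPos K (algebraMap (𝓞 K) K α))
    (hind : ¬ ∃ β γ : 𝓞 K, β ∈ I ∧ γ ∈ I ∧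
      TotPos K (algebraMap (𝓞 K) K β) ∧ TotPos K (algebraMap (𝓞 K) K γ) ∧ α = β + γ) :
    Algebra.norm ℚ (algebraMap (𝓞 K) K α) ≤
      |(NumberField.discr K : ℚ)| * (Ideal.absNorm I : ℚ) ^ 2 := by
  have : IsTotallyReal K := ⟨hreal⟩
  by_contra! hlt
  obtain ⟨β, hβI, hβ0, hsq⟩ :=
    exists_ne_zero_mem_ideal_forall_sq_lt hI (hlt.trans_le (le_abs_self _))
  have hβ_sq_lt (φ : K →+* ℝ) : φ β * φ β < φ α := by
    have := hsq (InfinitePlace.mk (Complex.ofRealHom.comp φ))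
    rwa [InfinitePlace.mk_ofRealHom_comp_apply_s5, InfinitePlace.mk_ofRealHom_comp_apply_s5, sq_abs,
      abs_of_pos (hα φ), sq] at this
  refine hind ⟨β * β, α - β * β, I.mul_mem_left β hβI, I.sub_mem hαI (I.mul_mem_left β hβI),
    fun φ => ?_, fun φ => ?_, by ring⟩
  · have hφβ : φ β ≠ 0 := (map_ne_zero φ).mpr (RingOfIntegers.coe_ne_zero_iff.mpr hβ0)
    simpa [map_mul] using mul_self_pos.mpr hφβ
  · simpa [map_sub, map_mul] using hβ_sq_lt φ
end

section
/- Let K be a totally real number field and I a nonzero fractional ideal. Let S' be a set of representatives of the I-indecomposable elements of I^+ modulo multiplication by totally positive units of O_K. Then I^{+,0} = ∑_{α ∈ S'} α·O_K^{+,0}, i.e., every element of I^{+,0} lies in the additive semigroup generated by {αx : α ∈ S', x ∈ O_K^{+,0}}. -/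
open NumberField Pointwise nonZeroDivisors

/-- The totally positive integers of `K`, together with `0`, viewed inside `K`. -/
def OPos (K : Type*) [Field K] [NumberField K] : Set K :=
  {x | (∃ y : 𝓞 K, algebraMap (𝓞 K) K y = x) ∧ (x = 0 ∨ TotPos K x)}

/-- The totally positive part of a subset `I ⊆ K`, together with `0` (i.e. `I^{+,0}`). -/
def IdealPos (K : Type*) [Field K] (I : Set K) : Set K := {x ∈ I | x = 0 ∨ TotPos K x}

/-- `κ(I)`: the least `n` such that `I^{+,0} = α₁𝓞⁺⁰ + ⋯ + αₙ𝓞⁺⁰` with each `αᵢ`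
totally positive (`⊤` if no such `n` exists). -/
noncomputable def kappa (K : Type*) [Field K] [NumberField K] (I : Set K) : ℕ∞ :=
  sInf ((↑) '' {n : ℕ | ∃ f : Fin n → K, (∀ i, TotPos K (f i)) ∧
    IdealPos K I = ∑ i : Fin n, (f i * ·) '' OPos K})

/-- `a` is an `I`-indecomposable: a totally positive element of `I` that is not the sum of
two totally positive elements of `I`. -/
def Indec (K : Type*) [Field K] (I : Set K) (a : K) : Prop :=
  a ∈ I ∧ TotPos K a ∧
    ¬ ∃ β γ : K, β ∈ I ∧ γ ∈ I ∧ TotPos K β ∧ TotPos K γ ∧ a = β + γ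

set_option linter.unusedSectionVars false
set_option linter.unusedVariables false

section Aux
variable {K : Type*} [Field K] [NumberField K]

lemma totPos_add {x y : K} (hx : TotPos K x) (hy : TotPos K y) : TotPos K (x + y) :=
  fun φ => by rw [map_add]; exact add_pos (hx φ) (hy φ)

lemma totPos_mul {x y : K} (hx : TotPos K x) (hy : TotPos K y) : TotPos K (x * y) :=
  fun φ => by rw [map_mul]; exact mul_pos (hx φ) (hy φ)

lemma trace_pos_of_totPos (hreal : ∀ v : InfinitePlace K, v.IsReal) {x : K}
    (hx : TotPos K x) : 0 < Algebra.trace ℚ K x := by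
  have h := trace_eq_sum_embeddings (E := ℂ) (x := x) (K := ℚ) (L := K)
  have hre : Algebra.trace ℚ K x = ∑ σ : K →ₐ[ℚ] ℂ, (σ x).re := by
    have := congrArg Complex.re h
    simpa using this
  have hne : Nonempty (K →ₐ[ℚ] ℂ) := by
    have : 0 < Fintype.card (K →ₐ[ℚ] ℂ) := by
      rw [AlgHom.card]; exact Module.finrank_pos
    exact Fintype.card_pos_iff.mp this
  have hpos : (0 : ℝ) < ∑ σ : K →ₐ[ℚ] ℂ, (σ x).re := by
    apply Finset.sum_pos _ Finset.univ_nonempty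
    intro σ _
    have hφ : ComplexEmbedding.IsReal (σ : K →+* ℂ) :=
      InfinitePlace.isReal_mk_iff.mp (hreal _)
    have h2 : ((hφ.embedding x : ℝ) : ℂ) = (σ : K →+* ℂ) x := hφ.coe_embedding_apply x
    have h3 : (0 : ℝ) < ((hφ.embedding x : ℝ) : ℂ).re := by rw [Complex.ofReal_re]; exact hx hφ.embedding
    rw [h2] at h3
    exact h3
  rw [← hre] at hpos
  exact_mod_cast hpos

lemma trace_int (y : 𝓞 K) :
    ∃ z : ℤ, (z : ℚ) = Algebra.trace ℚ K (algebraMap (𝓞 K) K y) := by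
  have h : IsIntegral ℤ (Algebra.trace ℚ K (algebraMap (𝓞 K) K y)) :=
    Algebra.isIntegral_trace (RingOfIntegers.isIntegral_coe y)
  obtain ⟨z, hz⟩ := IsIntegrallyClosed.isIntegral_iff.mp h
  exact ⟨z, by exact_mod_cast hz⟩

end Aux

/-- If `S'` is a set of representatives of the `I`-indecomposables modulo multiplication by
totally positive units, then `I^{+,0}` is the additive monoid generated by
`{αx : α ∈ S', x ∈ 𝓞_K^{+,0}}`. -/
theorem idealPos_eq_closure_indecomposables
    (K : Type*) [Field K] [NumberField K]
    (hreal : ∀ v : InfinitePlace K, v.IsReal)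
    (I : FractionalIdeal (𝓞 K)⁰ K) (hI : I ≠ 0)
    (S' : Set K)
    (hS1 : ∀ a ∈ S', Indec K ((I : Submodule (𝓞 K) K) : Set K) a)
    (hS2 : ∀ b, Indec K ((I : Submodule (𝓞 K) K) : Set K) b →
      ∃! a, a ∈ S' ∧ ∃ u : (𝓞 K)ˣ, TotPos K (algebraMap (𝓞 K) K u) ∧
        b = a * algebraMap (𝓞 K) K u) :
    IdealPos K ((I : Submodule (𝓞 K) K) : Set K) =
      (AddSubmonoid.closure {z : K | ∃ a ∈ S', ∃ x ∈ OPos K, z = a * x} : Set K) := by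
  classical
  set Gen : Set K := {z : K | ∃ a ∈ S', ∃ x ∈ OPos K, z = a * x} with hGen
  -- denominator
  obtain ⟨a, haS, haI⟩ := I.isFractional
  have ha0 : a ≠ 0 := nonZeroDivisors.ne_zero haS
  set c : K := algebraMap (𝓞 K) K a with hc
  have hc0 : c ≠ 0 := fun h => ha0 (by
    exact (map_eq_zero_iff _ (IsFractionRing.injective (𝓞 K) K)).mp h)
  set d : K := c ^ 2 with hd
  have hdpos : TotPos K d := by
    intro φ
    rw [hd, map_pow]
    have hne : φ c ≠ 0 := fun h => hc0 (φ.injective (by rw [h, map_zero]))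
    positivity
  have hden : ∀ x ∈ (I : Submodule (𝓞 K) K), ∃ y : 𝓞 K,
      algebraMap (𝓞 K) K y = d * x := by
    intro x hx
    obtain ⟨b, hb⟩ := haI x hx
    refine ⟨a * b, ?_⟩
    rw [map_mul, hb, Algebra.smul_def, hd, ← hc]
    ring
  set t : K → ℚ := fun x => Algebra.trace ℚ K (d * x) with ht
  have htadd : ∀ x y : K, t (x + y) = t x + t y := by
    intro x y; simp [ht, mul_add]
  have htone : ∀ x ∈ (I : Submodule (𝓞 K) K), TotPos K x → 1 ≤ t x := by
    intro x hx hxp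
    obtain ⟨y, hy⟩ := hden x hx
    obtain ⟨z, hz⟩ := trace_int y
    have hpos : 0 < t x := trace_pos_of_totPos hreal (totPos_mul hdpos hxp)
    have hzt : (z : ℚ) = t x := by rw [hz, hy]
    have : 0 < z := by exact_mod_cast hzt ▸ hpos
    have : (1 : ℤ) ≤ z := this
    calc (1 : ℚ) ≤ (z : ℚ) := by exact_mod_cast this
      _ = t x := hzt
  -- main induction
  have main : ∀ n : ℕ, ∀ x ∈ (I : Submodule (𝓞 K) K), TotPos K x → t x ≤ n →
      x ∈ AddSubmonoid.closure Gen := by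
    intro n
    induction n with
    | zero => intro x hx hxp hle
              exact absurd (le_trans (htone x hx hxp) hle) (by norm_num)
    | succ n ih =>
      intro x hx hxp hle
      by_cases hind : Indec K ((I : Submodule (𝓞 K) K) : Set K) x
      · obtain ⟨α, ⟨hαS, u, hu, hxu⟩, -⟩ := hS2 x hind
        exact AddSubmonoid.subset_closure
          ⟨α, hαS, algebraMap (𝓞 K) K u, ⟨⟨u, rfl⟩, Or.inr hu⟩, hxu⟩
      · have hdec : ∃ β γ : K, β ∈ ((I : Submodule (𝓞 K) K) : Set K) ∧
            γ ∈ ((I : Submodule (𝓞 K) K) : Set K) ∧ TotPos K β ∧ TotPos K γ ∧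
            x = β + γ := by
          by_contra h
          exact hind ⟨hx, hxp, h⟩
        obtain ⟨β, γ, hβI, hγI, hβp, hγp, hxe⟩ := hdec
        have hsum : t β + t γ = t x := by rw [hxe, htadd]
        have h1β := htone β hβI hβp
        have h1γ := htone γ hγI hγp
        have hβn : t β ≤ n := by
          have : ((n : ℚ) + 1) = ((n + 1 : ℕ) : ℚ) := by push_cast; ring
          linarith [hle, this ▸ hle]
        have hγn : t γ ≤ n := by
          have : ((n : ℚ) + 1) = ((n + 1 : ℕ) : ℚ) := by push_cast; ring
          linarith [hle, this ▸ hle]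
        rw [hxe]
        exact add_mem (ih β hβI hβp hβn) (ih γ hγI hγp hγn)
  ext x
  constructor
  · rintro ⟨hxI, hx0 | hxp⟩
    · rw [hx0]; exact zero_mem _
    · exact main ⌈t x⌉₊ x hxI hxp (Nat.le_ceil _)
  · intro hx
    let M : AddSubmonoid K :=
      { carrier := IdealPos K ((I : Submodule (𝓞 K) K) : Set K),
        zero_mem' := ⟨Submodule.zero_mem _, Or.inl rfl⟩,
        add_mem' := by
          rintro p q ⟨hp1, hp2⟩ ⟨hq1, hq2⟩
          refine ⟨Submodule.add_mem _ hp1 hq1, ?_⟩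
          rcases hp2 with hp2 | hp2 <;> rcases hq2 with hq2 | hq2
          · exact Or.inl (by rw [hp2, hq2, add_zero])
          · exact Or.inr (by rw [hp2, zero_add]; exact hq2)
          · exact Or.inr (by rw [hq2, add_zero]; exact hp2)
          · exact Or.inr (totPos_add hp2 hq2) }
    have hsub : Gen ⊆ (M : Set K) := by
      rintro z ⟨α, hαS, w, ⟨⟨y, hy⟩, hw0⟩, hz⟩
      obtain ⟨hαI, hαp, -⟩ := hS1 α hαS
      refine ⟨?_, ?_⟩
      · have : z = y • α := by
          rw [hz, ← hy, Algebra.smul_def]; ring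
        rw [this]
        exact Submodule.smul_mem _ _ hαI
      · rcases hw0 with hw0 | hwp
        · exact Or.inl (by rw [hz, hw0, mul_zero])
        · exact Or.inr (hz ▸ totPos_mul hαp hwp)
    exact AddSubmonoid.closure_le.mpr hsub hx
end

section
/- Let K be a totally real number field and I a nonzero fractional ideal of O_K. Then κ(I) is finite; in fact κ(I) is at most the number of orbits of I-indecomposable elements under multiplication by totally positive units of O_K, and this number of orbits is finite. -/
open NumberField Pointwise nonZeroDivisors

/-- The relation identifying `I`-indecomposables that differ by a totally positive unit. -/
def UnitRel (K : Type*) [Field K] [NumberField K] (I : Set K)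
    (a b : {x : K // Indec K I x}) : Prop :=
  ∃ u : (𝓞 K)ˣ, TotPos K (algebraMap (𝓞 K) K u) ∧ b.1 = a.1 * algebraMap (𝓞 K) K u

/-!
Every totally positive `x ∈ I` is a finite sum of `I`-indecomposables: split `x` as long as it
is decomposable; this terminates because, for a totally positive `d ∈ 𝓞 K` with `d I ⊆ 𝓞 K`, the
trace of `d x` is a positive integer that drops strictly along each splitting. Hence one
representative from each orbit of indecomposables generates `I^{+,0}` over `𝓞_K^{+,0}`.

There are finitely many orbits because indecomposables have bounded norm. If `N(α)` is large,
Minkowski's theorem gives a nonzero `a ∈ I` with `|σ a|` small compared with `σ α` at every real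
embedding `σ`, and multiplying `a` by a bounded integer `θ` having the signs of `a` gives
`θ a ∈ I⁺` with `α - θ a ∈ I⁺`. Finally, `α ↦ (d α)` maps the orbits injectively to principal ideals
of bounded norm.
-/

section TotPos

variable {K : Type*} [Field K] {x y : K}

theorem TotPos.add (hx : TotPos K x) (hy : TotPos K y) : TotPos K (x + y) :=
  fun φ ↦ by rw [map_add]; exact add_pos (hx φ) (hy φ)

theorem TotPos.mul (hx : TotPos K x) (hy : TotPos K y) : TotPos K (x * y) :=
  fun φ ↦ by rw [map_mul]; exact mul_pos (hx φ) (hy φ)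

theorem TotPos.of_mul (hx : TotPos K x) (hxy : TotPos K (x * y)) : TotPos K y :=
  fun φ ↦ pos_of_mul_pos_right (by simpa using hxy φ) (hx φ).le

theorem eq_zero_or_totPos_add (hx : x = 0 ∨ TotPos K x) (hy : y = 0 ∨ TotPos K y) :
    x + y = 0 ∨ TotPos K (x + y) := by
  rcases hx with rfl | hx <;> rcases hy with rfl | hy
  exacts [Or.inl (add_zero 0), Or.inr (by simpa using hy), Or.inr (by simpa using hx),
    Or.inr (hx.add hy)]

theorem totPos_one : TotPos K 1 :=
  fun φ ↦ by simp

theorem totPos_mul_self (hx : x ≠ 0) : TotPos K (x * x) :=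
  fun φ ↦ by rw [map_mul]; exact mul_self_pos.mpr ((map_ne_zero φ).mpr hx)

end TotPos

section Places

open NumberField.InfinitePlace

variable {K : Type*} [Field K]

theorem NumberField.InfinitePlace.exists_embedding_of_isReal_eq (φ : K →+* ℝ) :
    ∃ (w : InfinitePlace K) (hw : w.IsReal), embedding_of_isReal hw = φ := by
  have hφ : ComplexEmbedding.IsReal (Complex.ofRealHom.comp φ) := by
    ext x
    simp [ComplexEmbedding.conjugate_coe_eq]
  refine ⟨mk _, isReal_mk_iff.mpr hφ, RingHom.ext fun x ↦ Complex.ofReal_injective ?_⟩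
  rw [embedding_of_isReal_apply, embedding_mk_eq_of_isReal hφ]
  rfl

theorem totPos_iff_forall_isReal {x : K} :
    TotPos K x ↔ ∀ (w : InfinitePlace K) (hw : w.IsReal), 0 < embedding_of_isReal hw x := by
  refine ⟨fun h w hw ↦ h _, fun h φ ↦ ?_⟩
  obtain ⟨w, hw, rfl⟩ := exists_embedding_of_isReal_eq φ
  exact h w hw

theorem NumberField.InfinitePlace.exists_apply_eq_abs (φ : K →+* ℝ) :
    ∃ w : InfinitePlace K, ∀ x, w x = |φ x| := by
  obtain ⟨w, hw, rfl⟩ := exists_embedding_of_isReal_eq φ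
  exact ⟨w, fun x ↦ by rw [← norm_embedding_of_isReal hw, Real.norm_eq_abs]⟩

end Places

theorem unitRel_equivalence {K : Type*} [Field K] [NumberField K] (S : Set K) :
    Equivalence (UnitRel K S) where
  refl _ := ⟨1, by simpa using totPos_one, by simp⟩
  symm := by
    rintro a b ⟨u, hu, hab⟩
    refine ⟨u⁻¹, hu.of_mul ?_, ?_⟩
    · simpa [← map_mul] using totPos_one
    · simp [hab]
  trans := by
    rintro a b c ⟨u, hu, hab⟩ ⟨v, hv, hbc⟩
    exact ⟨u * v, by simpa using hu.mul hv, by rw [hbc, hab, Units.val_mul, map_mul, mul_assoc]⟩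

theorem mem_image_oPos_of_unitRel {K : Type*} [Field K] [NumberField K] {S : Set K}
    {a b : {x // Indec K S x}} (h : UnitRel K S a b) : b.1 ∈ (a.1 * ·) '' OPos K :=
  let ⟨u, hu, hab⟩ := h
  ⟨_, ⟨⟨u, rfl⟩, Or.inr hu⟩, hab.symm⟩

section Trace

variable {K : Type*} [Field K] [NumberField K] [IsTotallyReal K]

theorem TotPos.trace_pos {x : K} (hx : TotPos K x) : 0 < Algebra.trace ℚ K x := by
  have hsum : (algebraMap ℚ ℂ (Algebra.trace ℚ K x)).re = ∑ σ : K →ₐ[ℚ] ℂ, (σ x).re := by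
    rw [trace_eq_sum_embeddings, Complex.re_sum]
  have hσ (σ : K →ₐ[ℚ] ℂ) : 0 < (σ x).re := by
    have hreal := IsTotallyReal.complexEmbedding_isReal (σ : K →+* ℂ)
    have := ComplexEmbedding.IsReal.coe_embedding_apply hreal x
    rw [AlgHom.coe_toRingHom] at this
    rw [← this, Complex.ofReal_re]
    exact hx _
  have : Nonempty (K →ₐ[ℚ] ℂ) := Fintype.card_pos_iff.mp (by simpa using Module.finrank_pos)
  have := hsum ▸ Finset.sum_pos (fun σ _ ↦ hσ σ) Finset.univ_nonempty
  simpa using this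

theorem one_le_trace_of_totPos {c : 𝓞 K} (hc : TotPos K (algebraMap (𝓞 K) K c)) :
    1 ≤ Algebra.trace ℚ K (algebraMap (𝓞 K) K c) := by
  have := hc.trace_pos
  rw [← Algebra.coe_trace_int] at this ⊢
  exact_mod_cast Int.cast_pos.mp this

end Trace

section Decomposition

variable {K : Type*} [Field K]

theorem mem_closure_indec_of_one_le {S : Set K} (μ : K →+ ℚ)
    (hμ : ∀ x ∈ S, TotPos K x → 1 ≤ μ x) {x : K} (hxS : x ∈ S) (hx : TotPos K x) :
    x ∈ AddSubmonoid.closure {a | Indec K S a} := by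
  suffices h : ∀ n : ℕ, ∀ x ∈ S, TotPos K x → μ x ≤ n →
      x ∈ AddSubmonoid.closure {a | Indec K S a} from
    h _ x hxS hx (Nat.le_ceil _)
  intro n
  induction n with
  | zero => exact fun x hxS hx hμx ↦ absurd (hμ x hxS hx) (by push_cast at hμx; linarith)
  | succ n ih =>
    intro x hxS hx hμx
    by_cases hind : Indec K S x
    · exact AddSubmonoid.subset_closure hind
    obtain ⟨β, γ, hβS, hγS, hβ, hγ, rfl⟩ : ∃ β γ : K, β ∈ S ∧ γ ∈ S ∧ TotPos K β ∧
        TotPos K γ ∧ x = β + γ := by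
      simpa [Indec, hxS, hx] using hind
    have hμβ := hμ β hβS hβ
    have hμγ := hμ γ hγS hγ
    rw [map_add] at hμx
    push_cast at hμx
    exact add_mem (ih β hβS hβ (by linarith)) (ih γ hγS hγ (by linarith))

end Decomposition

theorem FractionalIdeal.exists_totPos_mul_mem_integers {K : Type*} [Field K] [NumberField K]
    (I : FractionalIdeal (𝓞 K)⁰ K) :
    ∃ d : 𝓞 K, d ≠ 0 ∧ TotPos K (algebraMap (𝓞 K) K d) ∧
      ∀ x ∈ I, ∃ c : 𝓞 K, algebraMap (𝓞 K) K c = algebraMap (𝓞 K) K d * x := by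
  obtain ⟨d, hd, hdI⟩ := I.isFractional
  have hd0 : d ≠ 0 := nonZeroDivisors.ne_zero hd
  refine ⟨d * d, mul_ne_zero hd0 hd0, ?_, fun x hx ↦ ?_⟩
  · rw [map_mul]
    exact totPos_mul_self ((map_ne_zero_iff _ (IsFractionRing.injective (𝓞 K) K)).mpr hd0)
  · obtain ⟨c, hc⟩ := hdI x hx
    refine ⟨d * c, ?_⟩
    rw [map_mul, map_mul, hc, Algebra.smul_def, mul_assoc]

theorem FractionalIdeal.mem_closure_indec {K : Type*} [Field K] [NumberField K]
    [IsTotallyReal K] (I : FractionalIdeal (𝓞 K)⁰ K) {x : K} (hxI : x ∈ I) (hx : TotPos K x) :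
    x ∈ AddSubmonoid.closure {a | Indec K ((I : Submodule (𝓞 K) K) : Set K) a} := by
  obtain ⟨d, -, hd, hdI⟩ := I.exists_totPos_mul_mem_integers
  refine mem_closure_indec_of_one_le
    ((Algebra.trace ℚ K).toAddMonoidHom.comp (AddMonoidHom.mulLeft (algebraMap (𝓞 K) K d)))
    (fun y hyI hy ↦ ?_) hxI hx
  obtain ⟨c, hc⟩ := hdI y hyI
  simpa [← hc] using one_le_trace_of_totPos (hc ▸ hd.mul hy)

section Generators

variable {K : Type*} [Field K]

theorem add_mem_idealPos {S : Submodule (𝓞 K) K} {x y : K} (hx : x ∈ IdealPos K S)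
    (hy : y ∈ IdealPos K S) : x + y ∈ IdealPos K S :=
  ⟨S.add_mem hx.1 hy.1, eq_zero_or_totPos_add hx.2 hy.2⟩

variable [NumberField K]

theorem zero_mem_oPos : (0 : K) ∈ OPos K :=
  ⟨⟨0, map_zero _⟩, Or.inl rfl⟩

theorem add_mem_oPos {x y : K} (hx : x ∈ OPos K) (hy : y ∈ OPos K) : x + y ∈ OPos K := by
  obtain ⟨⟨c, rfl⟩, hx⟩ := hx
  obtain ⟨⟨c', rfl⟩, hy⟩ := hy
  exact ⟨⟨c + c', map_add _ _ _⟩, eq_zero_or_totPos_add hx hy⟩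

theorem mul_mem_idealPos {S : Submodule (𝓞 K) K} {g z : K} (hgS : g ∈ S) (hg : TotPos K g)
    (hz : z ∈ OPos K) : g * z ∈ IdealPos K S := by
  obtain ⟨⟨c, rfl⟩, hz0 | hz⟩ := hz
  · exact ⟨by simp [hz0], Or.inl (by simp [hz0])⟩
  · refine ⟨?_, Or.inr (hg.mul hz)⟩
    rw [mul_comm, ← Algebra.smul_def]
    exact S.smul_mem c hgS

variable {ι : Type*} [Fintype ι] {g : ι → K}

theorem zero_mem_sum_image_oPos : (0 : K) ∈ ∑ i, (g i * ·) '' OPos K :=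
  (Set.mem_fintype_sum _ _).mpr ⟨0, fun _ ↦ ⟨0, zero_mem_oPos, mul_zero _⟩, by simp⟩

theorem add_mem_sum_image_oPos {x y : K} (hx : x ∈ ∑ i, (g i * ·) '' OPos K)
    (hy : y ∈ ∑ i, (g i * ·) '' OPos K) : x + y ∈ ∑ i, (g i * ·) '' OPos K := by
  rw [Set.mem_fintype_sum] at hx hy ⊢
  obtain ⟨t, ht, rfl⟩ := hx
  obtain ⟨t', ht', rfl⟩ := hy
  refine ⟨t + t', fun i ↦ ?_, by simp [Finset.sum_add_distrib]⟩
  obtain ⟨z, hz, hzt⟩ := ht i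
  obtain ⟨z', hz', hzt'⟩ := ht' i
  exact ⟨z + z', add_mem_oPos hz hz', by simp [mul_add, hzt, hzt']⟩

theorem mem_sum_image_oPos_of_mem {i : ι} {x : K} (hx : x ∈ (g i * ·) '' OPos K) :
    x ∈ ∑ i, (g i * ·) '' OPos K := by
  classical
  rw [Set.mem_fintype_sum]
  refine ⟨Pi.single i x, fun j ↦ ?_, by simp⟩
  rcases eq_or_ne j i with rfl | hj
  · simpa using hx
  · exact ⟨0, zero_mem_oPos, by simp [hj]⟩

theorem idealPos_eq_sum_image_oPos {S : Submodule (𝓞 K) K} (hgS : ∀ i, g i ∈ S)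
    (hg : ∀ i, TotPos K (g i)) (hcover : ∀ a, Indec K S a → ∃ i, a ∈ (g i * ·) '' OPos K)
    (hdecomp : ∀ x ∈ S, TotPos K x → x ∈ AddSubmonoid.closure {a | Indec K S a}) :
    IdealPos K S = ∑ i, (g i * ·) '' OPos K := by
  refine Set.Subset.antisymm (fun x hx ↦ ?_) fun x hx ↦ ?_
  · have hcl : x ∈ AddSubmonoid.closure {a | Indec K S a} := by
      obtain ⟨hxS, rfl | hx⟩ := hx
      exacts [zero_mem _, hdecomp x hxS hx]
    clear hx
    induction hcl using AddSubmonoid.closure_induction with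
    | mem a ha => exact (hcover a ha).elim fun i hi ↦ mem_sum_image_oPos_of_mem hi
    | zero => exact zero_mem_sum_image_oPos
    | add _ _ _ _ hx hy => exact add_mem_sum_image_oPos hx hy
  · obtain ⟨t, ht, rfl⟩ := (Set.mem_fintype_sum _ _).mp hx
    refine Finset.sum_induction _ (· ∈ IdealPos K S) (fun _ _ ↦ add_mem_idealPos)
      ⟨S.zero_mem, Or.inl rfl⟩ fun i _ ↦ ?_
    obtain ⟨z, hz, hzt⟩ := ht i
    exact hzt ▸ mul_mem_idealPos (hgS i) (hg i) hz

end Generators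

section Orbits

variable {K : Type*} [Field K] [NumberField K]

theorem natAbs_norm_int_eq_abs_norm (c : 𝓞 K) :
    ((Algebra.norm ℤ c).natAbs : ℝ) = |(Algebra.norm ℚ (algebraMap (𝓞 K) K c) : ℝ)| := by
  rw [Nat.cast_natAbs, Int.cast_abs, ← Algebra.coe_norm_int]
  rfl

theorem finite_quot_unitRel {S : Set K} {d : 𝓞 K} (hd : d ≠ 0)
    (hS : ∀ x ∈ S, ∃ c : 𝓞 K, algebraMap (𝓞 K) K c = algebraMap (𝓞 K) K d * x) {C : ℝ}
    (hC : ∀ α, Indec K S α → |(Algebra.norm ℚ α : ℝ)| ≤ C) :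
    Finite (Quot (UnitRel K S)) := by
  choose num hnum using fun a : {x // Indec K S x} ↦ hS a.1 a.2.1
  have hinj := IsFractionRing.injective (𝓞 K) K
  have hdK : algebraMap (𝓞 K) K d ≠ 0 := (map_ne_zero_iff _ hinj).mpr hd
  have span_eq_iff (a b) : Ideal.span {num a} = Ideal.span {num b} ↔ UnitRel K S a b := by
    rw [Ideal.span_singleton_eq_span_singleton]
    constructor
    · rintro ⟨u, hu⟩
      have hba : b.1 = a.1 * algebraMap (𝓞 K) K u :=
        mul_left_cancel₀ hdK (by rw [← hnum b, ← hu, map_mul, hnum a, mul_assoc])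
      exact ⟨u, a.2.2.1.of_mul (hba ▸ b.2.2.1), hba⟩
    · rintro ⟨u, -, hab⟩
      exact ⟨u, hinj (by rw [map_mul, hnum, hnum, hab, mul_assoc])⟩
  let F : Quot (UnitRel K S) → Ideal (𝓞 K) :=
    Quot.lift (fun a ↦ Ideal.span {num a}) fun a b h ↦ (span_eq_iff a b).mpr h
  have hF : Function.Injective F := by
    rintro ⟨a⟩ ⟨b⟩ h
    exact Quot.sound ((span_eq_iff a b).mp h)
  let n := ⌊|(Algebra.norm ℚ (algebraMap (𝓞 K) K d) : ℝ)| * C⌋₊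
  have hFn (q) : Ideal.absNorm (F q) ≤ n := by
    induction q using Quot.ind with | _ a => ?_
    refine Nat.le_floor ?_
    rw [Ideal.absNorm_span_singleton, natAbs_norm_int_eq_abs_norm, hnum, map_mul, Rat.cast_mul, abs_mul]
    exact mul_le_mul_of_nonneg_left (hC a.1 a.2) (abs_nonneg _)
  have := (Ideal.finite_setOfPred_absNorm_le (S := 𝓞 K) n).to_subtype
  exact Finite.of_injective (fun q ↦ (⟨F q, hFn q⟩ : {J : Ideal (𝓞 K) | Ideal.absNorm J ≤ n}))
    fun _ _ h ↦ hF (congrArg Subtype.val h)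

end Orbits

section Minkowski

open NumberField.InfinitePlace NumberField.mixedEmbedding

variable {K : Type*} [Field K] [NumberField K]

theorem exists_forall_abs_embedding_sub_le :
    ∃ R : ℝ, ∀ s : {w : InfinitePlace K // w.IsReal} → ℝ, ∃ θ : 𝓞 K,
      ∀ w, |embedding_of_isReal w.2 (algebraMap (𝓞 K) K θ) - s w| ≤ R := by
  classical
  obtain ⟨R, hR⟩ := (ZSpan.fundamentalDomain_isBounded (latticeBasis K)).exists_norm_le
  refine ⟨R, fun s ↦ ?_⟩
  let x : mixedSpace K := ⟨s, 0⟩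
  obtain ⟨v, hv, -⟩ := ZSpan.exist_unique_vadd_mem_fundamentalDomain (latticeBasis K) (-x)
  obtain ⟨θ, hθ⟩ := (mem_span_latticeBasis K).mp v.2
  refine ⟨θ, fun w ↦ ?_⟩
  calc |embedding_of_isReal w.2 (algebraMap (𝓞 K) K θ) - s w|
      = ‖((v : mixedSpace K) + -x).1 w‖ := by
        rw [← hθ]
        simp [x, mixedEmbedding_apply_isReal, sub_eq_add_neg]
    _ ≤ ‖((v : mixedSpace K) + -x).1‖ := norm_le_pi_norm _ _
    _ ≤ ‖(v : mixedSpace K) + -x‖ := norm_fst_le _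
    _ ≤ R := hR _ hv

theorem exists_totPos_mul_of_ne_zero :
    ∃ M : ℝ, 0 < M ∧ ∀ a : K, a ≠ 0 → ∃ θ : 𝓞 K, TotPos K (algebraMap (𝓞 K) K θ * a) ∧
      ∀ φ : K →+* ℝ, |φ (algebraMap (𝓞 K) K θ)| ≤ M := by
  obtain ⟨R, hR⟩ := exists_forall_abs_embedding_sub_le (K := K)
  refine ⟨2 * |R| + 1, by positivity, fun a ha ↦ ?_⟩
  -- `θ` lies within `R` of the point `±(|R| + 1)` whose signs are those of `a`.
  obtain ⟨θ, hθ⟩ := hR fun w ↦ if 0 < embedding_of_isReal w.2 a then |R| + 1 else -(|R| + 1)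
  have hθ' (w) (hw : IsReal w) := abs_le.mp ((hθ ⟨w, hw⟩).trans (le_abs_self R))
  refine ⟨θ, totPos_iff_forall_isReal.mpr fun w hw ↦ ?_, fun φ ↦ ?_⟩
  · have hwa : embedding_of_isReal hw a ≠ 0 := (map_ne_zero _).mpr ha
    have h := hθ' w hw
    rw [map_mul]
    split_ifs at h with hpos
    · exact mul_pos (by linarith) hpos
    · exact mul_pos_of_neg_of_neg (by linarith) (lt_of_le_of_ne (not_lt.mp hpos) hwa)
  · obtain ⟨w, hw, rfl⟩ := exists_embedding_of_isReal_eq φ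
    have h := hθ' w hw
    rw [abs_le]
    split_ifs at h <;> constructor <;> linarith [abs_nonneg R]

variable [IsTotallyReal K]

theorem exists_ne_zero_mem_lt_of_lt_prod (I : (FractionalIdeal (𝓞 K)⁰ K)ˣ) :
    ∃ B : ℝ, ∀ f : InfinitePlace K → NNReal, B < ∏ w, (f w : ℝ) →
      ∃ a ∈ (I : FractionalIdeal (𝓞 K)⁰ K), a ≠ 0 ∧ ∀ w, w a < f w := by
  refine ⟨(minkowskiBound K I).toReal, fun f hf ↦ exists_ne_zero_mem_ideal_lt K I ?_⟩
  rw [convexBodyLT_volume]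
  simp_rw [IsTotallyReal.mult_eq, pow_one]
  refine lt_of_lt_of_le ?_ (le_mul_of_one_le_left' (by exact_mod_cast one_le_convexBodyLTFactor K))
  exact (ENNReal.toReal_lt_toReal (minkowskiBound_lt_top K I).ne ENNReal.coe_ne_top).mp
    (by simpa using hf)

end Minkowski

section NormBound

open NumberField.InfinitePlace

variable {K : Type*} [Field K] [NumberField K] [IsTotallyReal K]

theorem exists_abs_norm_le_of_indec (I : FractionalIdeal (𝓞 K)⁰ K) (hI : I ≠ 0) :
    ∃ C : ℝ, ∀ α, Indec K ((I : Submodule (𝓞 K) K) : Set K) α →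
      |(Algebra.norm ℚ α : ℝ)| ≤ C := by
  obtain ⟨M, hM, hθ⟩ := exists_totPos_mul_of_ne_zero (K := K)
  obtain ⟨B, hB⟩ := exists_ne_zero_mem_lt_of_lt_prod (Units.mk0 I hI)
  refine ⟨(2 * M) ^ Fintype.card (InfinitePlace K) * B, fun α ⟨hαI, hα, hαind⟩ ↦ ?_⟩
  by_contra! hbig
  let f (w : InfinitePlace K) : NNReal := (w α / (2 * M)).toNNReal
  have hf (w) : (f w : ℝ) = w α / (2 * M) := Real.coe_toNNReal _ (by positivity)
  have hprod : B < ∏ w, (f w : ℝ) := by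
    have hnorm := prod_eq_abs_norm α
    simp_rw [IsTotallyReal.mult_eq, pow_one] at hnorm
    simp_rw [hf, Finset.prod_div_distrib, hnorm, Finset.prod_const, Finset.card_univ]
    rw [lt_div_iff₀ (by positivity)]
    push_cast
    linarith
  obtain ⟨a, haI, ha0, haf⟩ := hB f hprod
  obtain ⟨θ, hθa, hθM⟩ := hθ a ha0
  have hβI : algebraMap (𝓞 K) K θ * a ∈ (I : Submodule (𝓞 K) K) := by
    rw [← Algebra.smul_def]
    exact Submodule.smul_mem _ _ haI
  refine hαind ⟨_, α - algebraMap (𝓞 K) K θ * a, hβI, sub_mem hαI hβI, hθa, fun φ ↦ ?_, by ring⟩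
  obtain ⟨w, hw⟩ := exists_apply_eq_abs φ
  have hφa : |φ a| < φ α / (2 * M) := by
    rw [← hw, ← abs_of_pos (hα φ), ← hw, ← hf]
    exact haf w
  have hφθa : |φ (algebraMap (𝓞 K) K θ * a)| < φ α / 2 := by
    rw [map_mul, abs_mul]
    calc |φ (algebraMap (𝓞 K) K θ)| * |φ a| ≤ M * |φ a| := by gcongr; exact hθM φ
      _ < M * (φ α / (2 * M)) := by gcongr
      _ = φ α / 2 := by field_simp
  rw [map_sub]
  linarith [abs_lt.mp hφθa, hα φ]

end NormBound

/-- `κ(I)` is finite: it is bounded by the (finite) number of orbits of `I`-indecomposables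
under multiplication by totally positive units. -/
theorem kappa_le_card_indec_orbits
    (K : Type*) [Field K] [NumberField K]
    (hreal : ∀ v : InfinitePlace K, v.IsReal)
    (I : FractionalIdeal (𝓞 K)⁰ K) (hI : I ≠ 0) :
    Finite (Quot (UnitRel K ((I : Submodule (𝓞 K) K) : Set K))) ∧
      kappa K ((I : Submodule (𝓞 K) K) : Set K) ≤
        (Nat.card (Quot (UnitRel K ((I : Submodule (𝓞 K) K) : Set K))) : ℕ∞) := by
  have : IsTotallyReal K := ⟨hreal⟩
  obtain ⟨d, hd0, -, hdI⟩ := I.exists_totPos_mul_mem_integers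
  obtain ⟨C, hC⟩ := exists_abs_norm_le_of_indec I hI
  have hfin : Finite (Quot (UnitRel K ((I : Submodule (𝓞 K) K) : Set K))) :=
    finite_quot_unitRel hd0 hdI hC
  refine ⟨hfin, sInf_le ?_⟩
  let e := Finite.equivFin (Quot (UnitRel K ((I : Submodule (𝓞 K) K) : Set K)))
  let g (i) : K := (e.symm i).out.1
  have hcover (a) (ha : Indec K ((I : Submodule (𝓞 K) K) : Set K) a) :
      ∃ i, a ∈ (g i * ·) '' OPos K := by
    let q := Quot.mk (UnitRel K _) ⟨a, ha⟩
    refine ⟨e q, ?_⟩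
    simpa [g] using mem_image_oPos_of_unitRel
      ((unitRel_equivalence _).eqvGen_iff.mp (Quot.eqvGen_exact (Quot.out_eq q)))
  exact ⟨_, ⟨g, fun i ↦ (e.symm i).out.2.2.1, idealPos_eq_sum_image_oPos
    (fun i ↦ (e.symm i).out.2.1) (fun i ↦ (e.symm i).out.2.2.1) hcover
    fun _ hxI hx ↦ I.mem_closure_indec hxI hx⟩, rfl⟩
end

section
/- In K = ℚ(√3), let I = (α) where α ∈ O_K satisfies α > 0 and α' < 0 (α' the Galois conjugate). Then there is no single totally positive α⁺ ∈ K with I^+ = α⁺·O_K^{+,0} \ {0}; i.e., κ(I) ≥ 2. -/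
/-! If `I^{+,0} = p 𝓞^{+,0}` with `p` totally positive, write the generator `α` of mixed sign as
`ρ - τ` with `ρ, τ ∈ I` totally positive (`τ = -n α σ(α) ∈ ℕ`, `ρ = α + τ`). Then `α / p` and
`p / α` are both integral, so `α / p` is a unit of mixed sign, hence of norm `-1`. But no element
of `𝓞 K = ℤ[√3]` has norm `-1`: `a² - 3b² = -1` is impossible modulo `3`. -/

open NumberField Pointwise nonZeroDivisors

theorem two_le_kappa {K : Type*} [Field K] [NumberField K] {I : Set K}
    (h₀ : IdealPos K I ≠ {0})
    (h₁ : ∀ p : K, TotPos K p → IdealPos K I ≠ (p * ·) '' OPos K) :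
    2 ≤ kappa K I := by
  refine le_sInf ?_
  rintro _ ⟨m, ⟨f, hf, hI⟩, rfl⟩
  by_contra! hm
  norm_cast at hm
  interval_cases m
  · exact h₀ (by simpa [← Set.singleton_zero] using hI)
  · exact h₁ (f 0) (hf 0) (by simpa using hI)

theorem exists_intCast_eq_of_isIntegral_ratCast {K : Type*} [Field K] [CharZero K] {q : ℚ}
    (h : IsIntegral ℤ (q : K)) : ∃ m : ℤ, (m : ℚ) = q := by
  rw [← eq_ratCast (algebraMap ℚ K), isIntegral_algebraMap_iff (algebraMap ℚ K).injective] at h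
  exact IsIntegrallyClosed.isIntegral_iff.mp h

theorem mem_image_span_singleton_iff {K : Type*} [Field K] {α : 𝓞 K} {x : K} :
    x ∈ (fun y => algebraMap (𝓞 K) K y) '' ((Ideal.span {α} : Ideal (𝓞 K)) : Set (𝓞 K)) ↔
      ∃ c : 𝓞 K, x = c * α := by
  constructor
  · rintro ⟨y, hy, rfl⟩
    obtain ⟨c, rfl⟩ := Ideal.mem_span_singleton'.mp hy
    exact ⟨c, map_mul _ _ _⟩
  · rintro ⟨c, rfl⟩
    exact ⟨c * α, Ideal.mem_span_singleton'.mpr ⟨c, rfl⟩, map_mul _ _ _⟩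

theorem exists_unit_eq_mul_of_idealPos_eq {K : Type*} [Field K] [NumberField K] {I : Set K}
    {α : 𝓞 K} (hα : (α : K) ≠ 0) (hI : ∀ x ∈ I, ∃ c : 𝓞 K, x = c * α) {p ρ τ : K}
    (hIp : IdealPos K I = (p * ·) '' OPos K) (hρ : ρ ∈ IdealPos K I) (hτ : τ ∈ IdealPos K I)
    (hρτ : ρ - τ = α) : ∃ u : (𝓞 K)ˣ, (α : K) = p * (u : 𝓞 K) := by
  have hp : p ∈ IdealPos K I := hIp ▸ ⟨1, ⟨⟨1, map_one _⟩, Or.inr fun ψ => by simp⟩, mul_one p⟩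
  obtain ⟨c, rfl⟩ := hI p hp.1
  rw [hIp] at hρ hτ
  obtain ⟨_, ⟨⟨y, rfl⟩, -⟩, rfl⟩ := hρ
  obtain ⟨_, ⟨⟨z, rfl⟩, -⟩, rfl⟩ := hτ
  have hcyz : c * (y - z) = 1 := by
    refine RingOfIntegers.coe_injective (mul_left_cancel₀ hα ?_)
    simp only [map_mul, map_sub, map_one]
    linear_combination hρτ
  refine ⟨⟨y - z, c, by rw [mul_comm, hcyz], hcyz⟩, ?_⟩
  simp only [map_sub] at hρτ ⊢
  linear_combination -hρτ

section QuadraticField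

variable {K : Type*} [Field K] [CharZero K] {σ : K ≃ₐ[ℚ] K} {s : K}

theorem exists_eq_ratCast_add_ratCast_mul (hdeg : Module.finrank ℚ K = 2) (hs : s ≠ 0)
    (hσ : σ s = -s) (x : K) : ∃ a b : ℚ, x = a + b * s := by
  have hindep : LinearIndependent ℚ ![(1 : K), s] := by
    refine LinearIndependent.pair_iff.mpr fun a b hab => ?_
    simp only [Algebra.smul_def, eq_ratCast, mul_one] at hab
    have hσab : (a : K) - b * s = 0 := by
      simpa [hσ, ← sub_eq_add_neg] using congrArg σ hab
    have ha : (a : K) = 0 := by linear_combination (hab + hσab) / 2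
    have hb : (b : K) = 0 := by
      simpa [hs] using (show (b : K) * s = 0 by linear_combination hab - ha)
    exact ⟨by exact_mod_cast ha, by exact_mod_cast hb⟩
  have hspan := (basisOfLinearIndependentOfCardEqFinrank hindep (by simp [hdeg])).span_eq
  rw [coe_basisOfLinearIndependentOfCardEqFinrank, Matrix.range_cons, Matrix.range_cons,
    Matrix.range_empty, Set.union_empty, Set.singleton_union] at hspan
  obtain ⟨a, b, hab⟩ := Submodule.mem_span_pair.mp (hspan ▸ Submodule.mem_top : x ∈ _)
  exact ⟨a, b, by simp [← hab, Algebra.smul_def]⟩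

theorem conj_ratCast_add_ratCast_mul (hσ : σ s = -s) (a b : ℚ) :
    σ (a + b * s) = a - b * s := by
  simp [hσ, sub_eq_add_neg]

section

variable (hdeg : Module.finrank ℚ K = 2) (hs : s ≠ 0) (hσ : σ s = -s) {d : ℚ}
  (hsd : s ^ 2 = d)
include hdeg hs hσ hsd

theorem exists_mul_conj_eq_ratCast (x : K) : ∃ q : ℚ, x * σ x = q := by
  obtain ⟨a, b, rfl⟩ := exists_eq_ratCast_add_ratCast_mul hdeg hs hσ x
  refine ⟨a ^ 2 - d * b ^ 2, ?_⟩
  rw [conj_ratCast_add_ratCast_mul hσ]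
  push_cast
  linear_combination (-(b : K) ^ 2) * hsd

theorem eq_or_eq_comp_conj (φ ψ : K →+* ℝ) : ψ = φ ∨ ψ = φ.comp (σ : K →+* K) := by
  have hsq : ∀ χ : K →+* ℝ, χ s ^ 2 = d := fun χ => by rw [← map_pow, hsd, map_ratCast]
  have : (ψ s - φ s) * (ψ s + φ s) = 0 := by linear_combination hsq ψ - hsq φ
  rcases mul_eq_zero.mp this with h | h
  · left
    ext x
    obtain ⟨a, b, rfl⟩ := exists_eq_ratCast_add_ratCast_mul hdeg hs hσ x
    simp [sub_eq_zero.mp h]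
  · right
    ext x
    obtain ⟨a, b, rfl⟩ := exists_eq_ratCast_add_ratCast_mul hdeg hs hσ x
    simp [conj_ratCast_add_ratCast_mul hσ, eq_neg_of_add_eq_zero_left h, sub_eq_add_neg]

theorem totPos_of_pos_of_pos_conj (φ : K →+* ℝ) {x : K} (hx : 0 < φ x) (hσx : 0 < φ (σ x)) :
    TotPos K x := fun ψ => by
  rcases eq_or_eq_comp_conj hdeg hs hσ hsd φ ψ with rfl | rfl
  exacts [hx, hσx]

theorem exists_mul_conj_eq_intCast {x : K} (hx : IsIntegral ℤ x) : ∃ m : ℤ, x * σ x = m := by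
  obtain ⟨q, hq⟩ := exists_mul_conj_eq_ratCast hdeg hs hσ hsd x
  obtain ⟨m, rfl⟩ := exists_intCast_eq_of_isIntegral_ratCast (hq ▸ hx.mul (map_isIntegral_int σ hx))
  exact ⟨m, by simp [hq]⟩

theorem mul_conj_eq_one_or_neg_one {x y : K} (hx : IsIntegral ℤ x) (hy : IsIntegral ℤ y)
    (hxy : x * y = 1) : x * σ x = 1 ∨ x * σ x = -1 := by
  obtain ⟨m, hm⟩ := exists_mul_conj_eq_intCast hdeg hs hσ hsd hx
  obtain ⟨m', hm'⟩ := exists_mul_conj_eq_intCast hdeg hs hσ hsd hy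
  have hσxy : σ x * σ y = 1 := by rw [← map_mul, hxy, map_one]
  have : m * m' = 1 := by
    have : ((m * m' : ℤ) : K) = 1 := by
      rw [Int.cast_mul, ← hm, ← hm']
      linear_combination σ x * σ y * hxy + hσxy
    exact_mod_cast this
  rcases Int.eq_one_or_neg_one_of_mul_eq_one this with rfl | rfl <;> simp [hm]

theorem exists_totPos_sub_eq_of_mixed_sign (φ : K →+* ℝ) {I : Set K} {α : 𝓞 K}
    (hI : ∀ c : 𝓞 K, (c * α : K) ∈ I) (hpos : 0 < φ α) (hneg : φ (σ α) < 0) :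
    ∃ ρ τ : K, ρ ∈ IdealPos K I ∧ τ ∈ IdealPos K I ∧ τ ≠ 0 ∧ ρ - τ = α := by
  -- `τ = -n α σ(α)` is a positive rational, and `ρ = α + τ` is totally positive once `n φ(α) > 1`.
  obtain ⟨n, hn⟩ := exists_nat_gt (φ α)⁻¹
  have hnα : 1 < n * φ α := by rwa [inv_lt_iff_one_lt_mul₀ hpos] at hn
  have hn0 : (0 : ℝ) < n := by nlinarith
  obtain ⟨q, hq⟩ := exists_mul_conj_eq_ratCast hdeg hs hσ hsd (α : K)
  have hφq : (q : ℝ) = φ α * φ (σ α) := by rw [← map_ratCast φ, ← hq, map_mul]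
  let β : 𝓞 K := RingOfIntegers.mapRingHom (σ : K →+* K) α
  have hβ : (β : K) = σ α := rfl
  have hτ : TotPos K (-(n * q)) := fun ψ => by
    simp only [map_neg, map_mul, map_natCast, map_ratCast, hφq]
    nlinarith
  refine ⟨α - n * q, -(n * q), ⟨?_, Or.inr ?_⟩, ⟨?_, Or.inr hτ⟩, ?_, by ring⟩
  · convert hI (1 - n * β) using 1
    simp only [map_sub, map_mul, map_one, map_natCast, hβ]
    linear_combination (n : K) * hq
  · refine totPos_of_pos_of_pos_conj hdeg hs hσ hsd φ ?_ ?_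
    · simp only [map_sub, map_mul, map_natCast, map_ratCast, hφq]
      nlinarith
    · simp only [map_sub, map_mul, map_natCast, map_ratCast, hφq]
      nlinarith
  · convert hI (-(n * β)) using 1
    simp only [map_neg, map_mul, map_natCast, hβ]
    linear_combination (n : K) * hq
  · intro h
    simpa [h] using hτ φ

end

theorem mul_conj_ne_neg_one (hdeg : Module.finrank ℚ K = 2) (hσ : σ s = -s) (hs3 : s ^ 2 = 3)
    {x : K} (hx : IsIntegral ℤ x) : x * σ x ≠ -1 := by
  -- `2a` and `6b` are integers (traces of `x` and of `(x - σ x) s`), and `a² - 3b² = -1`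
  -- then reads `(6b)² = 3(2a)² + 12`, which has no solution modulo 9.
  intro hN
  have hs : s ≠ 0 := by rintro rfl; norm_num at hs3
  have hsint : IsIntegral ℤ s :=
    ⟨Polynomial.X ^ 2 - Polynomial.C 3, Polynomial.monic_X_pow_sub_C 3 two_ne_zero, by simp [hs3]⟩
  have hσx := map_isIntegral_int σ hx
  obtain ⟨a, b, rfl⟩ := exists_eq_ratCast_add_ratCast_mul hdeg hs hσ x
  rw [conj_ratCast_add_ratCast_mul hσ] at hN hσx
  obtain ⟨u, hu⟩ := exists_intCast_eq_of_isIntegral_ratCast (K := K) (q := 2 * a) <| by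
    rw [show ((2 * a : ℚ) : K) = (a + b * s) + (a - b * s) by push_cast; ring]
    exact hx.add hσx
  obtain ⟨v, hv⟩ := exists_intCast_eq_of_isIntegral_ratCast (K := K) (q := 6 * b) <| by
    rw [show ((6 * b : ℚ) : K) = ((a + b * s) - (a - b * s)) * s by
      push_cast; linear_combination (-2 * (b : K)) * hs3]
    exact (hx.sub hσx).mul hsint
  have hab : a ^ 2 - 3 * b ^ 2 = -1 := by
    have : ((a ^ 2 - 3 * b ^ 2 : ℚ) : K) = ((-1 : ℚ) : K) := by
      push_cast; linear_combination hN + (b : K) ^ 2 * hs3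
    exact_mod_cast this
  have huv : v ^ 2 = 3 * u ^ 2 + 12 := by
    qify; rw [hu, hv]; linear_combination (-12) * hab
  have hmod9 : ∀ u v : ZMod 9, v ^ 2 ≠ 3 * u ^ 2 + 12 := by decide
  exact hmod9 u v (by exact_mod_cast congrArg (Int.cast : ℤ → ZMod 9) huv)

theorem coe_unit_mul_conj_eq_one (hdeg : Module.finrank ℚ K = 2) (hσ : σ s = -s)
    (hs3 : s ^ 2 = 3) (u : (𝓞 K)ˣ) : ((u : 𝓞 K) : K) * σ (u : 𝓞 K) = 1 := by
  have hs : s ≠ 0 := by rintro rfl; norm_num at hs3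
  have hsd : s ^ 2 = ((3 : ℚ) : K) := by rw [hs3]; norm_num
  have hu : ((u : 𝓞 K) : K) * ((u⁻¹ : (𝓞 K)ˣ) : 𝓞 K) = 1 := by
    rw [← map_mul, Units.mul_inv, map_one]
  exact (mul_conj_eq_one_or_neg_one hdeg hs hσ hsd (u : 𝓞 K).isIntegral_coe
    (u⁻¹ : (𝓞 K)ˣ).1.isIntegral_coe hu).resolve_right
    (mul_conj_ne_neg_one hdeg hσ hs3 (u : 𝓞 K).isIntegral_coe)

end QuadraticField

theorem kappa_ge_two_in_Q_sqrt3_general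
    (K : Type*) [Field K] [NumberField K]
    (hdeg : Module.finrank ℚ K = 2)
    (sq3 : K) (hsq3 : sq3 ^ 2 = 3)
    (σ : K ≃ₐ[ℚ] K) (hσ : σ sq3 = -sq3)
    (α : 𝓞 K)
    (φ : K →+* ℝ)
    (hpos : 0 < φ (algebraMap (𝓞 K) K α))
    (hneg : φ (σ (algebraMap (𝓞 K) K α)) < 0) :
    2 ≤ kappa K ((fun y => algebraMap (𝓞 K) K y) ''
      ((Ideal.span {α} : Ideal (𝓞 K)) : Set (𝓞 K))) := by
  have hs : sq3 ≠ 0 := by rintro rfl; norm_num at hsq3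
  have hsd : sq3 ^ 2 = ((3 : ℚ) : K) := by rw [hsq3]; norm_num
  obtain ⟨ρ, τ, hρ, hτ, hτ0, hρτ⟩ := exists_totPos_sub_eq_of_mixed_sign hdeg hs hσ hsd φ
    (fun c => mem_image_span_singleton_iff.mpr ⟨c, rfl⟩) hpos hneg
  refine two_le_kappa (fun h => hτ0 (by simpa [h] using hτ)) fun p hp hIp => ?_
  have hα : (α : K) ≠ 0 := fun h => by simp [h] at hpos
  obtain ⟨u, hu⟩ := exists_unit_eq_mul_of_idealPos_eq hα
    (fun x hx => mem_image_span_singleton_iff.mp hx) hIp hρ hτ hρτ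
  have hu' : algebraMap (𝓞 K) K α = p * (u : 𝓞 K) := hu
  rw [hu', map_mul] at hpos
  rw [hu', map_mul, map_mul] at hneg
  have hφu : 0 < φ (u : 𝓞 K) := pos_of_mul_pos_right hpos (hp φ).le
  have hφσu : φ (σ (u : 𝓞 K)) < 0 := neg_of_mul_neg_right hneg (hp (φ.comp σ)).le
  have hnorm := congrArg φ (coe_unit_mul_conj_eq_one hdeg hσ hsq3 u)
  rw [map_mul, map_one] at hnorm
  nlinarith

/-- In `K = ℚ(√3)`, an ideal generated by an element of mixed signature has `κ(I) ≥ 2`: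
its positive part has no single totally positive generator. -/
theorem kappa_ge_two_in_Q_sqrt3
    (K : Type*) [Field K] [NumberField K]
    (hdeg : Module.finrank ℚ K = 2)
    (sq3 : K) (hsq3 : sq3 ^ 2 = 3)
    (σ : K ≃ₐ[ℚ] K) (hσ : σ sq3 = -sq3)
    (α : 𝓞 K) (hα : α ≠ 0)
    (φ : K →+* ℝ)
    (hpos : 0 < φ (algebraMap (𝓞 K) K α))
    (hneg : φ (σ (algebraMap (𝓞 K) K α)) < 0) :
    2 ≤ kappa K ((fun y => algebraMap (𝓞 K) K y) ''
      ((Ideal.span {α} : Ideal (𝓞 K)) : Set (𝓞 K))) :=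
  kappa_ge_two_in_Q_sqrt3_general K hdeg sq3 hsq3 σ hσ α φ hpos hneg
end
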